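/- arXiv:2107.05103 — 4 statements merged into one kernel-verified Lean document; each statement's English description precedes it below -/
import Mathlib

section
/- Let 0 < α < 1, t > 0, and let f : [0, t] → ℝ be continuously differentiable. Then (1/Γ(1−α)) ∫₀ᵗ (t−τ)^(−α) f′(τ) dτ = (2 sin(πα)/π) ∫₀^∞ ( ∫₀ᵗ y^(2α−1) e^(−(t−τ) y²) f′(τ) dτ ) dy. -/
open MeasureTheory intervalIntegral

/-- The Gaussian-type inner integral. -/
lemma caputo_aux_inner (α : ℝ) (hα0 : 0 < α) {b : ℝ} (hb : 0 < b) :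
    ∫ y in Set.Ioi (0:ℝ), y ^ (2*α - 1) * Real.exp (-b * y ^ 2)
      = b ^ (-α) * (Real.Gamma α / 2) := by
  have hs : (-1 : ℝ) < 2*α - 1 := by linarith
  have h := integral_rpow_mul_exp_neg_mul_rpow (p := 2) (q := 2*α-1) two_pos hs hb
  have h2 : (2*α - 1 + 1)/2 = α := by ring
  have h3 : -(2*α - 1 + 1)/2 = -α := by ring
  rw [h2, h3] at h
  simp_rw [← Real.rpow_two]
  rw [h]; ring

/-- Integrability of `(t-τ)^(-α) * g τ` on `Ioc 0 t` for `g` continuous on `Icc 0 t`. -/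
lemma caputo_aux_integrable (α t : ℝ) (hα1 : α < 1) (ht : 0 < t) (g : ℝ → ℝ)
    (hg : ContinuousOn g (Set.Icc (0:ℝ) t)) :
    IntegrableOn (fun τ => (t - τ) ^ (-α) * g τ) (Set.Ioc 0 t) := by
  obtain ⟨M, hM⟩ := isCompact_Icc.exists_bound_of_continuousOn hg
  have h1 : IntervalIntegrable (fun x : ℝ => x ^ (-α)) volume 0 t :=
    intervalIntegrable_rpow' (by linarith)
  have h2 := (h1.comp_sub_left t).symm
  simp only [sub_zero, sub_self] at h2
  have hpow : IntegrableOn (fun τ : ℝ => (t - τ) ^ (-α)) (Set.Ioc 0 t) :=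
    (intervalIntegrable_iff_integrableOn_Ioc_of_le ht.le).mp h2
  have hgmeas : AEStronglyMeasurable g (volume.restrict (Set.Ioc 0 t)) :=
    (hg.mono Set.Ioc_subset_Icc_self).aestronglyMeasurable measurableSet_Ioc
  have hm : Measurable (fun τ : ℝ => (t - τ) ^ (-α)) := by fun_prop
  refine Integrable.mono' (hpow.mul_const M) (hm.aestronglyMeasurable.mul hgmeas) ?_
  filter_upwards [ae_restrict_mem measurableSet_Ioc] with τ hτ
  have h0 : (0:ℝ) ≤ (t - τ) ^ (-α) := Real.rpow_nonneg (by linarith [hτ.2]) _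
  have := hM τ ⟨hτ.1.le, hτ.2⟩
  calc ‖(t - τ) ^ (-α) * g τ‖ = (t - τ) ^ (-α) * ‖g τ‖ := by
        rw [norm_mul, Real.norm_of_nonneg h0]
    _ ≤ (t - τ) ^ (-α) * M := by nlinarith [norm_nonneg (g τ)]

/-- Extension (fractional power) representation of the Caputo derivative:
for `0 < α < 1`, `t > 0` and continuously differentiable `f` on `[0, t]`,
`(1/Γ(1-α)) ∫₀ᵗ (t-τ)^(-α) f'(τ) dτ
  = (2 sin(πα)/π) ∫₀^∞ (∫₀ᵗ y^(2α-1) e^(-(t-τ)y²) f'(τ) dτ) dy`. -/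
theorem caputo_extension_representation (α t : ℝ) (hα0 : 0 < α) (hα1 : α < 1) (ht : 0 < t)
    (f f' : ℝ → ℝ)
    (hderiv : ∀ τ ∈ Set.Icc (0 : ℝ) t, HasDerivAt f (f' τ) τ)
    (hcont : ContinuousOn f' (Set.Icc (0 : ℝ) t)) :
    (1 / Real.Gamma (1 - α)) * ∫ τ in (0 : ℝ)..t, (t - τ) ^ (-α) * f' τ =
      (2 * Real.sin (Real.pi * α) / Real.pi) *
        ∫ y in Set.Ioi (0 : ℝ),
          ∫ τ in (0 : ℝ)..t, y ^ (2 * α - 1) * Real.exp (-(t - τ) * y ^ 2) * f' τ := by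
  have hα1' : (0:ℝ) < 1 - α := by linarith
  have hs : (-1 : ℝ) < 2*α - 1 := by linarith
  set μ := volume.restrict (Set.Ioi (0:ℝ)) with hμ
  set ν := volume.restrict (Set.Ioc (0:ℝ) t) with hν
  -- a.e. point of Ioc is in Ioo
  have hae : ∀ᵐ τ ∂ν, τ ∈ Set.Ioo 0 t := by
    have h1 : ∀ᵐ τ ∂ν, τ ∈ Set.Ioc 0 t := ae_restrict_mem measurableSet_Ioc
    have h2 : ∀ᵐ τ : ℝ ∂volume, τ ≠ t := by simp [ae_iff]
    filter_upwards [h1, ae_restrict_of_ae h2] with τ hτ1 hτ2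
    exact ⟨hτ1.1, lt_of_le_of_ne hτ1.2 hτ2⟩
  -- the inner y-integral, computed for τ ∈ Ioo 0 t
  have hcalc : ∀ τ ∈ Set.Ioo (0:ℝ) t,
      (∫ y in Set.Ioi (0:ℝ), y ^ (2 * α - 1) * Real.exp (-(t - τ) * y ^ 2) * f' τ)
        = Real.Gamma α / 2 * ((t - τ) ^ (-α) * f' τ) := by
    intro τ hτ
    rw [MeasureTheory.integral_mul_const, caputo_aux_inner α hα0 (by linarith [hτ.2])]
    ring
  -- measurability of the two-variable integrand
  have hGcont : ContinuousOn
      (fun p : ℝ × ℝ => p.1 ^ (2*α - 1) * Real.exp (-(t - p.2) * p.1 ^ 2) * f' p.2)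
      (Set.Ioi (0:ℝ) ×ˢ Set.Ioc (0:ℝ) t) := by
    have c1 : ContinuousOn (fun p : ℝ × ℝ => p.1 ^ (2*α - 1))
        (Set.Ioi (0:ℝ) ×ˢ Set.Ioc (0:ℝ) t) := fun p hp =>
      ((Real.continuousAt_rpow_const p.1 _ (Or.inl (ne_of_gt hp.1))).comp
        continuousAt_fst).continuousWithinAt
    have c2 : Continuous (fun p : ℝ × ℝ => Real.exp (-(t - p.2) * p.1 ^ 2)) := by fun_prop
    have c3 : ContinuousOn (fun p : ℝ × ℝ => f' p.2)
        (Set.Ioi (0:ℝ) ×ˢ Set.Ioc (0:ℝ) t) :=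
      hcont.comp continuous_snd.continuousOn (fun p hp => Set.Ioc_subset_Icc_self hp.2)
    exact (c1.mul c2.continuousOn).mul c3
  have hGmeas : AEStronglyMeasurable
      (fun p : ℝ × ℝ => p.1 ^ (2*α - 1) * Real.exp (-(t - p.2) * p.1 ^ 2) * f' p.2)
      (μ.prod ν) := by
    rw [hμ, hν, Measure.prod_restrict]
    exact hGcont.aestronglyMeasurable (measurableSet_Ioi.prod measurableSet_Ioc)
  -- product integrability
  have hGint : Integrable
      (fun p : ℝ × ℝ => p.1 ^ (2*α - 1) * Real.exp (-(t - p.2) * p.1 ^ 2) * f' p.2)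
      (μ.prod ν) := by
    rw [integrable_prod_iff' hGmeas]
    constructor
    · filter_upwards [hae] with τ hτ
      exact (integrableOn_rpow_mul_exp_neg_mul_sq (by linarith [hτ.2]) hs).mul_const (f' τ)
    · have hphi : IntegrableOn (fun τ => (t - τ) ^ (-α) * (Real.Gamma α / 2 * |f' τ|))
          (Set.Ioc 0 t) :=
        caputo_aux_integrable α t hα1 ht _ (continuousOn_const.mul hcont.abs)
      refine hphi.congr ?_
      filter_upwards [hae] with τ hτ
      have h1 : (∫ y, ‖y ^ (2*α - 1) * Real.exp (-(t - τ) * y ^ 2) * f' τ‖ ∂μ)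
          = ∫ y in Set.Ioi (0:ℝ), y ^ (2*α - 1) * Real.exp (-(t - τ) * y ^ 2) * |f' τ| := by
        rw [hμ]
        refine setIntegral_congr_fun measurableSet_Ioi (fun y hy => ?_)
        rw [norm_mul, norm_mul, Real.norm_of_nonneg (Real.rpow_nonneg (le_of_lt hy) _),
          Real.norm_of_nonneg (Real.exp_nonneg _), Real.norm_eq_abs]
      rw [h1, MeasureTheory.integral_mul_const, caputo_aux_inner α hα0 (by linarith [hτ.2])]
      ring
  -- swap the integrals
  have hswap :
      (∫ y in Set.Ioi (0:ℝ),
          ∫ τ in (0:ℝ)..t, y ^ (2 * α - 1) * Real.exp (-(t - τ) * y ^ 2) * f' τ)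
        = ∫ τ in Set.Ioc (0:ℝ) t,
            ∫ y in Set.Ioi (0:ℝ), y ^ (2 * α - 1) * Real.exp (-(t - τ) * y ^ 2) * f' τ := by
    have : ∀ y : ℝ,
        (∫ τ in (0:ℝ)..t, y ^ (2 * α - 1) * Real.exp (-(t - τ) * y ^ 2) * f' τ)
          = ∫ τ in Set.Ioc (0:ℝ) t, y ^ (2 * α - 1) * Real.exp (-(t - τ) * y ^ 2) * f' τ :=
      fun y => intervalIntegral.integral_of_le ht.le
    simp_rw [this]
    exact MeasureTheory.integral_integral_swap hGint
  have hkey :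
      (∫ τ in Set.Ioc (0:ℝ) t,
          ∫ y in Set.Ioi (0:ℝ), y ^ (2 * α - 1) * Real.exp (-(t - τ) * y ^ 2) * f' τ)
        = Real.Gamma α / 2 * ∫ τ in Set.Ioc (0:ℝ) t, (t - τ) ^ (-α) * f' τ := by
    rw [← MeasureTheory.integral_const_mul]
    refine setIntegral_congr_ae measurableSet_Ioc ?_
    filter_upwards [(by simp [ae_iff] : ∀ᵐ τ : ℝ ∂volume, τ ≠ t)] with τ hne hτ
    exact hcalc τ ⟨hτ.1, lt_of_le_of_ne hτ.2 hne⟩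
  rw [intervalIntegral.integral_of_le ht.le, hswap, hkey]
  -- final algebra using the reflection formula
  have href := Real.Gamma_mul_Gamma_one_sub α
  have hΓ1 : (0:ℝ) < Real.Gamma (1 - α) := Real.Gamma_pos_of_pos hα1'
  have hsin : (0:ℝ) < Real.sin (Real.pi * α) := by
    apply Real.sin_pos_of_pos_of_lt_pi
    · positivity
    · nlinarith [Real.pi_pos]
  have hπ : Real.pi ≠ 0 := Real.pi_ne_zero
  have hcoef : 1 / Real.Gamma (1 - α)
      = 2 * Real.sin (Real.pi * α) / Real.pi * (Real.Gamma α / 2) := by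
    have h2 : Real.Gamma α * Real.Gamma (1 - α) * Real.sin (Real.pi * α) = Real.pi := by
      rw [href]; field_simp
    field_simp
    rw [mul_comm Real.pi α] at h2
    linear_combination (-1 : ℝ) * h2
  rw [hcoef]; ring
end

section
/- Let y ≠ 0, t ≥ 0, and let g : [0, ∞) → ℝ be continuously differentiable with |g(s)| ≤ G and |g′(s)| ≤ G′ for all s ∈ [0, t]. Then | ∫₀ᵗ e^(−y² τ) g(t−τ) dτ | ≤ (2G + t G′)/y². -/
/-- `O(y⁻²)` decay of the Duhamel term: for `y ≠ 0`, `t ≥ 0` and continuously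
differentiable `g` with `|g| ≤ G`, `|g'| ≤ G'` on `[0, t]`,
`|∫₀ᵗ e^(-y²τ) g(t-τ) dτ| ≤ (2G + tG')/y²`. -/
theorem duhamel_term_decay (y t G G' : ℝ) (hy : y ≠ 0) (ht : 0 ≤ t)
    (g g' : ℝ → ℝ)
    (hderiv : ∀ s ∈ Set.Icc (0 : ℝ) t, HasDerivAt g (g' s) s)
    (hcont : ContinuousOn g' (Set.Icc (0 : ℝ) t))
    (hG : ∀ s ∈ Set.Icc (0 : ℝ) t, |g s| ≤ G)
    (hG' : ∀ s ∈ Set.Icc (0 : ℝ) t, |g' s| ≤ G') :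
    |∫ τ in (0 : ℝ)..t, Real.exp (-y ^ 2 * τ) * g (t - τ)| ≤ (2 * G + t * G') / y ^ 2 := by
  have hy2 : (0:ℝ) < y ^ 2 := by positivity
  have huIcc : Set.uIcc (0:ℝ) t = Set.Icc 0 t := Set.uIcc_of_le ht
  have hmem : ∀ τ ∈ Set.uIcc (0:ℝ) t, t - τ ∈ Set.Icc (0:ℝ) t := by
    intro τ hτ
    rw [huIcc] at hτ
    exact ⟨by linarith [hτ.2], by linarith [hτ.1]⟩
  -- derivatives
  have hu : ∀ τ ∈ Set.uIcc (0:ℝ) t, HasDerivAt (fun τ => g (t - τ)) (-(g' (t - τ))) τ := by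
    intro τ hτ
    have h1 : HasDerivAt (fun τ : ℝ => t - τ) (-1) τ := (hasDerivAt_id τ).const_sub t
    have := (hderiv (t - τ) (hmem τ hτ)).comp τ h1
    exact this.congr_deriv (by ring)
  have hv : ∀ τ ∈ Set.uIcc (0:ℝ) t,
      HasDerivAt (fun τ => -(1 / y ^ 2) * Real.exp (-y ^ 2 * τ)) (Real.exp (-y ^ 2 * τ)) τ := by
    intro τ _
    have h1 : HasDerivAt (fun τ : ℝ => -y ^ 2 * τ) (-y ^ 2) τ := by
      simpa using (hasDerivAt_id τ).const_mul (-y ^ 2)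
    have h2 := (Real.hasDerivAt_exp (-y ^ 2 * τ)).comp τ h1
    have h3 := h2.const_mul (-(1 / y ^ 2))
    exact h3.congr_deriv (by field_simp)
  -- integrability
  have hcont2 : ContinuousOn (fun τ => -(g' (t - τ))) (Set.Icc (0:ℝ) t) := by
    apply ContinuousOn.neg
    apply hcont.comp (Continuous.continuousOn (by continuity))
    intro τ hτ
    exact hmem τ (huIcc ▸ hτ)
  have hu'int : IntervalIntegrable (fun τ => -(g' (t - τ))) MeasureTheory.volume 0 t :=
    hcont2.intervalIntegrable_of_Icc ht
  have hv'int : IntervalIntegrable (fun τ => Real.exp (-y ^ 2 * τ)) MeasureTheory.volume 0 t :=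
    (Continuous.intervalIntegrable (by continuity) 0 t)
  -- integration by parts
  have key := intervalIntegral.integral_mul_deriv_eq_deriv_mul hu hv hu'int hv'int
  -- key : ∫ g(t-τ) * exp(-y²τ) = g(t-t)*v t - g(t-0)*v 0 - ∫ (-(g'(t-τ))) * v τ
  have hswap : (∫ τ in (0:ℝ)..t, Real.exp (-y ^ 2 * τ) * g (t - τ))
      = ∫ τ in (0:ℝ)..t, g (t - τ) * Real.exp (-y ^ 2 * τ) := by
    apply intervalIntegral.integral_congr
    intro τ _
    ring
  rw [hswap, key]
  -- bound the remaining integral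
  have hG0 : (0:ℝ) ≤ G := le_trans (abs_nonneg _) (hG 0 ⟨le_refl _, ht⟩)
  have hbound : |∫ τ in (0:ℝ)..t, -(g' (t - τ)) * (-(1 / y ^ 2) * Real.exp (-y ^ 2 * τ))|
      ≤ G' * (1 / y ^ 2) * |t - 0| := by
    rw [← Real.norm_eq_abs]
    apply intervalIntegral.norm_integral_le_of_norm_le_const
    intro x hx
    have hx' : x ∈ Set.Icc (0:ℝ) t := Set.mem_Icc_of_Ioc (Set.uIoc_of_le ht ▸ hx)
    have h1 : Real.exp (-y ^ 2 * x) ≤ 1 := by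
      apply Real.exp_le_one_iff.mpr
      nlinarith [hx'.1]
    have h2 : |g' (t - x)| ≤ G' := hG' _ (hmem x (huIcc ▸ hx'))
    have h3 : (0:ℝ) < Real.exp (-y ^ 2 * x) := Real.exp_pos _
    rw [Real.norm_eq_abs, abs_mul, abs_mul, abs_neg, abs_neg, abs_of_pos h3,
      abs_of_pos (by positivity : (0:ℝ) < 1 / y ^ 2)]
    calc |g' (t - x)| * (1 / y ^ 2 * Real.exp (-y ^ 2 * x))
        ≤ G' * (1 / y ^ 2 * 1) := by
          apply mul_le_mul h2 _ (by positivity) (le_trans (abs_nonneg _) h2)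
          exact mul_le_mul_of_nonneg_left h1 (by positivity)
      _ = G' * (1 / y ^ 2) := by ring
  have hgt : |g (t - 0)| ≤ G := hG _ (by simpa using Set.mem_Icc.mpr ⟨le_refl _, ht⟩)
  have hg0 : |g (t - t)| ≤ G := hG _ (by simpa using ht)
  have hexp : Real.exp (-y ^ 2 * t) ≤ 1 := by
    apply Real.exp_le_one_iff.mpr
    nlinarith
  have hexp0 : (0:ℝ) < Real.exp (-y ^ 2 * t) := Real.exp_pos _
  have hG'0 : (0:ℝ) ≤ G' := le_trans (abs_nonneg _) (hG' 0 ⟨le_refl _, ht⟩)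
  set I := ∫ τ in (0:ℝ)..t, -(g' (t - τ)) * (-(1 / y ^ 2) * Real.exp (-y ^ 2 * τ)) with hI
  have h1 : |g (t - t) * (-(1 / y ^ 2) * Real.exp (-y ^ 2 * t)) -
      g (t - 0) * (-(1 / y ^ 2) * Real.exp (-y ^ 2 * 0)) - I|
      ≤ |g (t - t)| * (1 / y ^ 2 * Real.exp (-y ^ 2 * t))
        + |g (t - 0)| * (1 / y ^ 2 * Real.exp (-y ^ 2 * 0)) + |I| := by
    calc _ ≤ |g (t - t) * (-(1 / y ^ 2) * Real.exp (-y ^ 2 * t)) -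
        g (t - 0) * (-(1 / y ^ 2) * Real.exp (-y ^ 2 * 0))| + |I| := abs_sub _ _
      _ ≤ |g (t - t) * (-(1 / y ^ 2) * Real.exp (-y ^ 2 * t))|
          + |g (t - 0) * (-(1 / y ^ 2) * Real.exp (-y ^ 2 * 0))| + |I| := by
            gcongr; exact abs_sub _ _
      _ = _ := by
        simp [abs_mul, abs_neg, Real.abs_exp,
          abs_of_pos (show (0:ℝ) < 1 / y ^ 2 by positivity), abs_inv, abs_of_pos hy2]
  have hexp00 : Real.exp (-y ^ 2 * 0) = 1 := by norm_num
  rw [hexp00] at h1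
  simp only [sub_zero] at hbound
  rw [abs_of_nonneg ht] at hbound
  calc |g (t - t) * (-(1 / y ^ 2) * Real.exp (-y ^ 2 * t)) -
        g (t - 0) * (-(1 / y ^ 2) * Real.exp (-y ^ 2 * 0)) - I|
      ≤ |g (t - t)| * (1 / y ^ 2 * Real.exp (-y ^ 2 * t))
        + |g (t - 0)| * (1 / y ^ 2 * 1) + |I| := by rw [hexp00]; exact h1
    _ ≤ G * (1 / y ^ 2 * 1) + G * (1 / y ^ 2 * 1) + G' * (1 / y ^ 2) * t := by
        have e1 : |g (t - t)| * (1 / y ^ 2 * Real.exp (-y ^ 2 * t)) ≤ G * (1 / y ^ 2 * 1) :=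
          mul_le_mul hg0 (mul_le_mul_of_nonneg_left hexp (by positivity)) (by positivity) hG0
        have e2 : |g (t - 0)| * (1 / y ^ 2 * 1) ≤ G * (1 / y ^ 2 * 1) :=
          mul_le_mul_of_nonneg_right hgt (by positivity)
        linarith
    _ = (2 * G + t * G') / y ^ 2 := by field_simp; ring
end

section
/- Let α > −1, β > 0, t ≥ 0. Let Φ₀ : (0, ∞) → ℝ be differentiable with |Φ₀(y)| ≤ P and |Φ₀′(y)| ≤ P′ for all y > 0, let g : [0, ∞) → ℝ be continuous with |g(s)| ≤ G for s ∈ [0, t], and set Φ(y, t) = e^(−y² t) Φ₀(y) + ∫₀ᵗ e^(−y² τ) g(t−τ) dτ. Then for any ξ : (0, ∞) → ℝ with finite weighted norms below, ‖ y ↦ ξ(β y) ∂_y Φ(y, t) ‖_{ω_{α,β}} ≤ 2 t P ‖ξ(β ·)‖_{ω_{α+2,β}} + P′ ‖ξ(β ·)‖_{ω_{α,β}} + 2 t² G ‖ξ(β ·)‖_{ω_{α+2,β}}. -/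
open MeasureTheory

lemma aux_sqrt_bound (a c Y : ℝ) (ha : 0 ≤ a) (hc : 0 ≤ c)
    (h : ∀ l : ℝ, 0 < l → 2 * Y ≤ l * a + c / l) : Y ≤ Real.sqrt (a * c) := by
  rcases eq_or_lt_of_le ha with ha0 | ha0
  · have : Y ≤ 0 := by
      by_contra hY
      push_neg at hY
      have hl : (0:ℝ) < c / Y + 1 := by positivity
      have := h _ hl
      rw [← ha0] at this
      have h3 : 2 * Y * (c / Y + 1) ≤ c := (le_div_iff₀ hl).mp (by linarith)
      have hYc : Y * (c / Y) = c := by field_simp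
      nlinarith
    calc Y ≤ 0 := this
      _ ≤ _ := Real.sqrt_nonneg _
  rcases eq_or_lt_of_le hc with hc0 | hc0
  · have : Y ≤ 0 := by
      by_contra hY
      push_neg at hY
      have hl : (0:ℝ) < Y / a := by positivity
      have := h _ hl
      rw [← hc0] at this
      have : 2 * Y ≤ Y / a * a := by simpa using this
      have hYa : Y / a * a = Y := by field_simp
      nlinarith
    calc Y ≤ 0 := this
      _ ≤ _ := Real.sqrt_nonneg _
  · have hsa : (0:ℝ) < Real.sqrt a := Real.sqrt_pos.2 ha0
    have hsc : (0:ℝ) < Real.sqrt c := Real.sqrt_pos.2 hc0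
    have hl : (0:ℝ) < Real.sqrt c / Real.sqrt a := by positivity
    have h2 := h _ hl
    rw [Real.sqrt_mul ha]
    have ha2 : Real.sqrt a ^ 2 = a := Real.sq_sqrt ha
    have hc2 : Real.sqrt c ^ 2 = c := Real.sq_sqrt hc
    have key : Real.sqrt c / Real.sqrt a * a + c / (Real.sqrt c / Real.sqrt a)
        = 2 * (Real.sqrt a * Real.sqrt c) := by
      field_simp
      nlinarith
    nlinarith

set_option maxHeartbeats 1000000 in
/-- Second estimate in the dynamical projection-error bound: with
`∂_y Φ(y,t) = -2yt e^(-y²t) Φ₀(y) + e^(-y²t) Φ₀'(y) - 2y ∫₀ᵗ τ e^(-y²τ) g(t-τ) dτ`,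
`|Φ₀| ≤ P`, `|Φ₀'| ≤ P'` on `(0,∞)`, `|g| ≤ G` on `[0,t]`, and `ξ` with finite
weighted norms,
`‖ξ(β·) ∂_y Φ(·,t)‖_{ω_{α,β}} ≤ 2tP ‖ξ(β·)‖_{ω_{α+2,β}} + P' ‖ξ(β·)‖_{ω_{α,β}}
  + 2t²G ‖ξ(β·)‖_{ω_{α+2,β}}`. -/
theorem projection_error_second_estimate (α β t P P' G : ℝ) (hα : -1 < α) (hβ : 0 < β)
    (ht : 0 ≤ t)
    (Φ₀ Φ₀' : ℝ → ℝ) (hderiv : ∀ y > (0 : ℝ), HasDerivAt Φ₀ (Φ₀' y) y)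
    (hP : ∀ y > (0 : ℝ), |Φ₀ y| ≤ P) (hP' : ∀ y > (0 : ℝ), |Φ₀' y| ≤ P')
    (g : ℝ → ℝ) (hg : ContinuousOn g (Set.Ici (0 : ℝ)))
    (hG : ∀ s ∈ Set.Icc (0 : ℝ) t, |g s| ≤ G)
    (ξ : ℝ → ℝ)
    (hint1 : IntegrableOn (fun y => y ^ α * Real.exp (-β * y) * (ξ (β * y)) ^ 2)
      (Set.Ioi (0 : ℝ)))
    (hint2 : IntegrableOn (fun y => y ^ (α + 2) * Real.exp (-β * y) * (ξ (β * y)) ^ 2)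
      (Set.Ioi (0 : ℝ))) :
    Real.sqrt (∫ y in Set.Ioi (0 : ℝ),
        y ^ α * Real.exp (-β * y) *
          (ξ (β * y) *
              (-2 * y * t * Real.exp (-y ^ 2 * t) * Φ₀ y + Real.exp (-y ^ 2 * t) * Φ₀' y -
                2 * y * ∫ τ in (0 : ℝ)..t, τ * Real.exp (-y ^ 2 * τ) * g (t - τ))) ^ 2) ≤
      2 * t * P *
          Real.sqrt (∫ y in Set.Ioi (0 : ℝ),
            y ^ (α + 2) * Real.exp (-β * y) * (ξ (β * y)) ^ 2) +
        P' * Real.sqrt (∫ y in Set.Ioi (0 : ℝ),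
            y ^ α * Real.exp (-β * y) * (ξ (β * y)) ^ 2) +
        2 * t ^ 2 * G *
          Real.sqrt (∫ y in Set.Ioi (0 : ℝ),
            y ^ (α + 2) * Real.exp (-β * y) * (ξ (β * y)) ^ 2) := by
  -- notation
  set f0 : ℝ → ℝ := fun y => y ^ α * Real.exp (-β * y) * (ξ (β * y)) ^ 2 with hf0
  set f2 : ℝ → ℝ := fun y => y ^ (α + 2) * Real.exp (-β * y) * (ξ (β * y)) ^ 2 with hf2
  set f1 : ℝ → ℝ := fun y => y ^ (α + 1) * Real.exp (-β * y) * (ξ (β * y)) ^ 2 with hf1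
  have hPnn : 0 ≤ P := le_trans (abs_nonneg _) (hP 1 one_pos)
  have hP'nn : 0 ≤ P' := le_trans (abs_nonneg _) (hP' 1 one_pos)
  have hGnn : 0 ≤ G := le_trans (abs_nonneg _) (hG 0 ⟨le_refl _, ht⟩)
  set C1 : ℝ := 2 * t * P + 2 * t ^ 2 * G with hC1
  have hC1nn : 0 ≤ C1 := by positivity
  -- pointwise facts on Ioi 0
  have hf0nn : ∀ y ∈ Set.Ioi (0:ℝ), 0 ≤ f0 y := fun y hy => by
    have : (0:ℝ) < y := hy
    positivity
  have hf2nn : ∀ y ∈ Set.Ioi (0:ℝ), 0 ≤ f2 y := fun y hy => by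
    have : (0:ℝ) < y := hy
    positivity
  have hf1nn : ∀ y ∈ Set.Ioi (0:ℝ), 0 ≤ f1 y := fun y hy => by
    have : (0:ℝ) < y := hy
    positivity
  set A0 : ℝ := ∫ y in Set.Ioi (0:ℝ), f0 y with hA0
  set A2 : ℝ := ∫ y in Set.Ioi (0:ℝ), f2 y with hA2
  have hA0nn : 0 ≤ A0 := setIntegral_nonneg measurableSet_Ioi hf0nn
  have hA2nn : 0 ≤ A2 := setIntegral_nonneg measurableSet_Ioi hf2nn
  -- rpow splitting on Ioi 0
  have hsplit1 : ∀ y ∈ Set.Ioi (0:ℝ), y ^ (α + 1) = y ^ α * y := fun y hy =>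
    Real.rpow_add_one (ne_of_gt hy) α
  have hsplit2 : ∀ y ∈ Set.Ioi (0:ℝ), y ^ (α + 2) = y ^ α * y ^ 2 := fun y hy => by
    have h1 : (α + 2) = α + 1 + 1 := by ring
    rw [h1, Real.rpow_add_one (ne_of_gt hy), Real.rpow_add_one (ne_of_gt hy)]
    ring
  -- integrability of f1
  have hintf1 : IntegrableOn f1 (Set.Ioi (0:ℝ)) := by
    have hmeas : AEStronglyMeasurable f1 (volume.restrict (Set.Ioi (0:ℝ))) := by
      have h1 : AEStronglyMeasurable (fun y => y * f0 y) (volume.restrict (Set.Ioi (0:ℝ))) :=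
        (aestronglyMeasurable_id.mul hint1.aestronglyMeasurable)
      refine h1.congr ?_
      filter_upwards [ae_restrict_mem measurableSet_Ioi] with y hy
      simp only [hf1, hf0]
      rw [hsplit1 y hy]; ring
    refine Integrable.mono' ((hint1.add hint2).div_const 2) hmeas ?_
    filter_upwards [ae_restrict_mem measurableSet_Ioi] with y hy
    rw [Real.norm_of_nonneg (hf1nn y hy)]
    simp only [hf1, hf0, hf2, Pi.add_apply, Pi.div_apply]
    rw [hsplit1 y hy, hsplit2 y hy]
    have hy0 : (0:ℝ) < y := hy
    have hyα : (0:ℝ) ≤ y ^ α := Real.rpow_nonneg hy0.le α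
    nlinarith [sq_nonneg (y - 1), Real.exp_pos (-β * y), sq_nonneg (ξ (β * y)),
      mul_nonneg hyα (mul_nonneg (Real.exp_pos (-β * y)).le (sq_nonneg (ξ (β * y))))]
  set Y : ℝ := ∫ y in Set.Ioi (0:ℝ), f1 y with hY
  -- Cauchy–Schwarz via λ-trick
  have hYle : Y ≤ Real.sqrt (A0 * A2) := by
    refine aux_sqrt_bound A0 A2 Y hA0nn hA2nn ?_
    intro l hl
    have hmono : 2 * Y ≤ ∫ y in Set.Ioi (0:ℝ), (l * f0 y + f2 y / l) := by
      rw [hY, ← integral_const_mul]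
      refine integral_mono_of_nonneg ?_ ((hint1.const_mul l).add (hint2.div_const l)) ?_
      · filter_upwards [ae_restrict_mem measurableSet_Ioi] with y hy
        have := hf1nn y hy; positivity
      · filter_upwards [ae_restrict_mem measurableSet_Ioi] with y hy
        simp only [hf1, hf0, hf2, Pi.add_apply]
        rw [hsplit1 y hy, hsplit2 y hy]
        have hy0 : (0:ℝ) < y := hy
        have hyα : (0:ℝ) ≤ y ^ α := Real.rpow_nonneg hy0.le α
        have hnn : (0:ℝ) ≤ y ^ α * (Real.exp (-β * y) * (ξ (β * y)) ^ 2) := by positivity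
        have key : 2 * y ≤ l + y ^ 2 / l := by
          have hx : y ^ 2 / l * l = y ^ 2 := div_mul_cancel₀ _ (ne_of_gt hl)
          nlinarith [sq_nonneg (l - y)]
        calc 2 * (y ^ α * y * Real.exp (-β * y) * ξ (β * y) ^ 2)
            = (2 * y) * (y ^ α * (Real.exp (-β * y) * (ξ (β * y)) ^ 2)) := by ring
          _ ≤ (l + y ^ 2 / l) * (y ^ α * (Real.exp (-β * y) * (ξ (β * y)) ^ 2)) := by
              exact mul_le_mul_of_nonneg_right key hnn
          _ = l * (y ^ α * Real.exp (-β * y) * ξ (β * y) ^ 2)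
              + y ^ α * y ^ 2 * Real.exp (-β * y) * ξ (β * y) ^ 2 / l := by ring
    rw [integral_add (hint1.const_mul l) (hint2.div_const l)] at hmono
    rw [integral_const_mul, integral_div] at hmono
    exact hmono
  -- bound on the time integral
  have hI : ∀ y : ℝ, |∫ τ in (0:ℝ)..t, τ * Real.exp (-y ^ 2 * τ) * g (t - τ)| ≤ t ^ 2 * G / 2 := by
    intro y
    have hcont : ContinuousOn (fun τ => τ * Real.exp (-y ^ 2 * τ) * g (t - τ)) (Set.Icc 0 t) := by
      refine ContinuousOn.mul ?_ ?_
      · exact (continuous_id.mul ((continuous_const.mul continuous_id).rexp)).continuousOn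
      · refine hg.comp (continuous_const.sub continuous_id).continuousOn ?_
        intro τ hτ
        simp only [Set.mem_Ici]
        exact sub_nonneg.2 hτ.2
    have hii : IntervalIntegrable (fun τ => τ * Real.exp (-y ^ 2 * τ) * g (t - τ)) volume 0 t := by
      have huIcc : Set.uIcc (0:ℝ) t = Set.Icc 0 t := Set.uIcc_of_le ht
      exact ContinuousOn.intervalIntegrable (huIcc ▸ hcont)
    have h1 : |∫ τ in (0:ℝ)..t, τ * Real.exp (-y ^ 2 * τ) * g (t - τ)|
        ≤ ∫ τ in (0:ℝ)..t, |τ * Real.exp (-y ^ 2 * τ) * g (t - τ)| :=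
      intervalIntegral.abs_integral_le_integral_abs ht
    have h2 : (∫ τ in (0:ℝ)..t, |τ * Real.exp (-y ^ 2 * τ) * g (t - τ)|)
        ≤ ∫ τ in (0:ℝ)..t, G * τ := by
      refine intervalIntegral.integral_mono_on ht hii.abs
        ((continuous_const.mul continuous_id).intervalIntegrable _ _) ?_
      intro τ hτ
      have hτ0 : (0:ℝ) ≤ τ := hτ.1
      have hgb : |g (t - τ)| ≤ G := hG _ ⟨sub_nonneg.2 hτ.2, by linarith [hτ.1]⟩
      have hE : Real.exp (-y ^ 2 * τ) ≤ 1 := Real.exp_le_one_iff.2 (by nlinarith [sq_nonneg y])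
      have hEp : (0:ℝ) < Real.exp (-y ^ 2 * τ) := Real.exp_pos _
      rw [abs_mul, abs_mul, abs_of_nonneg hτ0, abs_of_nonneg hEp.le]
      calc τ * Real.exp (-y ^ 2 * τ) * |g (t - τ)| ≤ τ * 1 * G := by
            apply mul_le_mul (mul_le_mul_of_nonneg_left hE hτ0) hgb (abs_nonneg _)
            positivity
        _ = G * τ := by ring
    have h3 : (∫ τ in (0:ℝ)..t, G * τ) = t ^ 2 * G / 2 := by
      rw [intervalIntegral.integral_const_mul, integral_id]
      ring
    linarith
  -- pointwise bound on the integrand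
  set D : ℝ → ℝ := fun y =>
    -2 * y * t * Real.exp (-y ^ 2 * t) * Φ₀ y + Real.exp (-y ^ 2 * t) * Φ₀' y -
      2 * y * ∫ τ in (0 : ℝ)..t, τ * Real.exp (-y ^ 2 * τ) * g (t - τ) with hD
  have hDbound : ∀ y ∈ Set.Ioi (0:ℝ), |D y| ≤ C1 * y + P' := by
    intro y hy
    have hy0 : (0:ℝ) < y := hy
    have hE : Real.exp (-y ^ 2 * t) ≤ 1 := Real.exp_le_one_iff.2 (by nlinarith [sq_nonneg y])
    have hEp : (0:ℝ) < Real.exp (-y ^ 2 * t) := Real.exp_pos _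
    have htri := abs_add_three (-2 * y * t * Real.exp (-y ^ 2 * t) * Φ₀ y)
      (Real.exp (-y ^ 2 * t) * Φ₀' y)
      (-(2 * y * ∫ τ in (0 : ℝ)..t, τ * Real.exp (-y ^ 2 * τ) * g (t - τ)))
    rw [abs_neg] at htri
    have h1 : |-2 * y * t * Real.exp (-y ^ 2 * t) * Φ₀ y| ≤ 2 * y * t * P := by
      rw [abs_mul]
      have e1 : |-2 * y * t * Real.exp (-y ^ 2 * t)| = 2 * y * t * Real.exp (-y ^ 2 * t) := by
        rw [show -2 * y * t * Real.exp (-y ^ 2 * t) = -(2 * y * t * Real.exp (-y ^ 2 * t)) by ring,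
          abs_neg, abs_of_nonneg (by positivity)]
      rw [e1]
      calc 2 * y * t * Real.exp (-y ^ 2 * t) * |Φ₀ y|
          ≤ 2 * y * t * Real.exp (-y ^ 2 * t) * P :=
            mul_le_mul_of_nonneg_left (hP y hy0) (by positivity)
        _ ≤ 2 * y * t * P := by
            nlinarith [mul_nonneg (mul_nonneg (mul_nonneg hy0.le ht) hPnn)
              (by linarith : (0:ℝ) ≤ 1 - Real.exp (-y ^ 2 * t))]
    have h2 : |Real.exp (-y ^ 2 * t) * Φ₀' y| ≤ P' := by
      rw [abs_mul, abs_of_nonneg hEp.le]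
      calc Real.exp (-y ^ 2 * t) * |Φ₀' y| ≤ 1 * P' :=
            mul_le_mul hE (hP' y hy0) (abs_nonneg _) zero_le_one
        _ = P' := one_mul _
    have h3 : |2 * y * ∫ τ in (0 : ℝ)..t, τ * Real.exp (-y ^ 2 * τ) * g (t - τ)|
        ≤ 2 * y * (t ^ 2 * G / 2) := by
      rw [abs_mul, abs_of_nonneg (by positivity : (0:ℝ) ≤ 2 * y)]
      exact mul_le_mul_of_nonneg_left (hI y) (by positivity)
    have hsub : D y = -2 * y * t * Real.exp (-y ^ 2 * t) * Φ₀ y +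
        Real.exp (-y ^ 2 * t) * Φ₀' y +
        -(2 * y * ∫ τ in (0 : ℝ)..t, τ * Real.exp (-y ^ 2 * τ) * g (t - τ)) := by
      rw [hD]; ring
    rw [hsub]
    refine le_trans htri ?_
    have h4 : (0:ℝ) ≤ y * (t ^ 2 * G) := by positivity
    rw [hC1]
    linarith [h1, h2, h3, h4]
  -- compare the LHS integrand with an integrable majorant
  set B : ℝ → ℝ := fun y => C1 ^ 2 * f2 y + 2 * C1 * P' * f1 y + P' ^ 2 * f0 y with hB
  have hBint : IntegrableOn B (Set.Ioi (0:ℝ)) :=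
    ((hint2.const_mul _).add (hintf1.const_mul _)).add (hint1.const_mul _)
  have hLB : (∫ y in Set.Ioi (0:ℝ),
      y ^ α * Real.exp (-β * y) * (ξ (β * y) * D y) ^ 2) ≤ ∫ y in Set.Ioi (0:ℝ), B y := by
    refine integral_mono_of_nonneg ?_ hBint ?_
    · filter_upwards [ae_restrict_mem measurableSet_Ioi] with y hy
      have hy0 : (0:ℝ) < y := hy
      positivity
    · filter_upwards [ae_restrict_mem measurableSet_Ioi] with y hy
      have hy0 : (0:ℝ) < y := hy
      have hDb := hDbound y hy
      have hrhs : (0:ℝ) ≤ C1 * y + P' := le_trans (abs_nonneg _) hDb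
      have hD2 : D y ^ 2 ≤ (C1 * y + P') ^ 2 := by
        rcases abs_le.mp hDb with ⟨hl, hr⟩
        exact sq_le_sq' hl hr
      simp only [hB, hf0, hf1, hf2]
      rw [hsplit1 y hy, hsplit2 y hy]
      have hw : (0:ℝ) ≤ y ^ α * Real.exp (-β * y) * (ξ (β * y)) ^ 2 := by positivity
      calc y ^ α * Real.exp (-β * y) * (ξ (β * y) * D y) ^ 2
          = (y ^ α * Real.exp (-β * y) * (ξ (β * y)) ^ 2) * D y ^ 2 := by ring
        _ ≤ (y ^ α * Real.exp (-β * y) * (ξ (β * y)) ^ 2) * (C1 * y + P') ^ 2 :=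
            mul_le_mul_of_nonneg_left hD2 hw
        _ = C1 ^ 2 * (y ^ α * y ^ 2 * Real.exp (-β * y) * ξ (β * y) ^ 2) +
            2 * C1 * P' * (y ^ α * y * Real.exp (-β * y) * ξ (β * y) ^ 2) +
            P' ^ 2 * (y ^ α * Real.exp (-β * y) * ξ (β * y) ^ 2) := by ring
  have hBval : (∫ y in Set.Ioi (0:ℝ), B y)
      = C1 ^ 2 * A2 + 2 * C1 * P' * Y + P' ^ 2 * A0 := by
    have i2 : Integrable (fun y => C1 ^ 2 * f2 y) (volume.restrict (Set.Ioi 0)) :=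
      hint2.const_mul _
    have i1 : Integrable (fun y => 2 * C1 * P' * f1 y) (volume.restrict (Set.Ioi 0)) :=
      hintf1.const_mul _
    have i0 : Integrable (fun y => P' ^ 2 * f0 y) (volume.restrict (Set.Ioi 0)) :=
      hint1.const_mul _
    have i21 : Integrable (fun y => C1 ^ 2 * f2 y + 2 * C1 * P' * f1 y)
        (volume.restrict (Set.Ioi 0)) := i2.add i1
    rw [hB]
    rw [integral_add i21 i0, integral_add i2 i1,
      integral_const_mul, integral_const_mul, integral_const_mul]
  set s0 : ℝ := Real.sqrt A0 with hs0
  set s2 : ℝ := Real.sqrt A2 with hs2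
  have hs0sq : s0 ^ 2 = A0 := Real.sq_sqrt hA0nn
  have hs2sq : s2 ^ 2 = A2 := Real.sq_sqrt hA2nn
  have hs0nn : 0 ≤ s0 := Real.sqrt_nonneg _
  have hs2nn : 0 ≤ s2 := Real.sqrt_nonneg _
  have hsqrtmul : Real.sqrt (A0 * A2) = s0 * s2 := Real.sqrt_mul hA0nn _
  have hfin : (∫ y in Set.Ioi (0:ℝ),
      y ^ α * Real.exp (-β * y) * (ξ (β * y) * D y) ^ 2) ≤ (C1 * s2 + P' * s0) ^ 2 := by
    have h5 : 2 * C1 * P' * Y ≤ 2 * C1 * P' * (s0 * s2) := by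
      refine mul_le_mul_of_nonneg_left ?_ (by positivity)
      rw [← hsqrtmul]; exact hYle
    have : (C1 * s2 + P' * s0) ^ 2
        = C1 ^ 2 * A2 + 2 * C1 * P' * (s0 * s2) + P' ^ 2 * A0 := by
      rw [← hs0sq, ← hs2sq]; ring
    rw [this]
    rw [hBval] at hLB
    linarith
  have hstep : Real.sqrt (∫ y in Set.Ioi (0:ℝ),
      y ^ α * Real.exp (-β * y) * (ξ (β * y) * D y) ^ 2) ≤ C1 * s2 + P' * s0 := by
    refine le_trans (Real.sqrt_le_sqrt hfin) ?_
    rw [Real.sqrt_sq (by positivity)]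
  calc Real.sqrt (∫ y in Set.Ioi (0:ℝ),
        y ^ α * Real.exp (-β * y) * (ξ (β * y) * D y) ^ 2) ≤ C1 * s2 + P' * s0 := hstep
    _ = 2 * t * P * s2 + P' * s0 + 2 * t ^ 2 * G * s2 := by rw [hC1]; ring
end

section
/- Let −1 < λ < −1/2, μ < 1, x > 0, and set x̃ = −x cos(λπ) > 0. Then ∫₀^∞ r^(−μ) e^(−r) e^(−x r^(−λ) cos(λπ)) sin(−x r^(−λ) sin(πλ) + πμ) dr = −(1/λ) x̃^(−(μ−1)/λ) ∫₀^∞ y^((μ−1)/λ − 1) e^(y) e^(−(x̃/y)^(1/λ)) sin(y tan(πλ) + πμ) dy, both integrals converging absolutely. -/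
open MeasureTheory

/-- Scaled form of Luchko's integral representation of the Wright function for
`-1 < λ < -1/2`, `μ < 1`, `x > 0`, with `x̃ = -x cos(λπ) > 0`, obtained from the
substitution `y = x̃ r^(-λ)`:
`∫₀^∞ r^(-μ) e^(-r) e^(-x r^(-λ) cos(λπ)) sin(-x r^(-λ) sin(πλ) + πμ) dr
  = -(1/λ) x̃^(-(μ-1)/λ) ∫₀^∞ y^((μ-1)/λ - 1) e^(y) e^(-(x̃/y)^(1/λ))
      sin(y tan(πλ) + πμ) dy`, both integrals converging absolutely. -/
theorem wright_scaled_representation_wave_regime (lam μ x xt : ℝ) (h1 : -1 < lam)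
    (h2 : lam < -1 / 2) (hμ : μ < 1) (hx : 0 < x)
    (hxt : xt = -x * Real.cos (lam * Real.pi)) :
    0 < xt ∧
      IntegrableOn (fun r : ℝ =>
        r ^ (-μ) * Real.exp (-r) * Real.exp (-x * r ^ (-lam) * Real.cos (lam * Real.pi)) *
          Real.sin (-x * r ^ (-lam) * Real.sin (Real.pi * lam) + Real.pi * μ))
        (Set.Ioi (0 : ℝ)) ∧
      IntegrableOn (fun y : ℝ =>
        y ^ ((μ - 1) / lam - 1) * Real.exp y * Real.exp (-(xt / y) ^ (1 / lam)) *
          Real.sin (y * Real.tan (Real.pi * lam) + Real.pi * μ))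
        (Set.Ioi (0 : ℝ)) ∧
      (∫ r in Set.Ioi (0 : ℝ),
          r ^ (-μ) * Real.exp (-r) * Real.exp (-x * r ^ (-lam) * Real.cos (lam * Real.pi)) *
            Real.sin (-x * r ^ (-lam) * Real.sin (Real.pi * lam) + Real.pi * μ)) =
        -(1 / lam) * xt ^ (-(μ - 1) / lam) *
          ∫ y in Set.Ioi (0 : ℝ),
            y ^ ((μ - 1) / lam - 1) * Real.exp y * Real.exp (-(xt / y) ^ (1 / lam)) *
              Real.sin (y * Real.tan (Real.pi * lam) + Real.pi * μ) := by
  have hπ := Real.pi_pos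
  have hlam0 : lam < 0 := by linarith
  have hlamne : lam ≠ 0 := ne_of_lt hlam0
  have hplam : (0:ℝ) < -lam := by linarith
  have hpne : (-lam) ≠ 0 := ne_of_gt hplam
  have hcos : Real.cos (lam * Real.pi) < 0 := by
    rw [show lam * Real.pi = -(-lam * Real.pi) by ring, Real.cos_neg]
    apply Real.cos_neg_of_pi_div_two_lt_of_lt
    · nlinarith
    · nlinarith
  have hxt0 : 0 < xt := by rw [hxt]; nlinarith
  have hcosne : Real.cos (Real.pi * lam) ≠ 0 := by
    rw [mul_comm]; exact ne_of_lt hcos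
  -- abbreviations
  set F : ℝ → ℝ := fun r : ℝ =>
    r ^ (-μ) * Real.exp (-r) * Real.exp (-x * r ^ (-lam) * Real.cos (lam * Real.pi)) *
      Real.sin (-x * r ^ (-lam) * Real.sin (Real.pi * lam) + Real.pi * μ) with hF
  set G : ℝ → ℝ := fun y : ℝ =>
    y ^ ((μ - 1) / lam - 1) * Real.exp y * Real.exp (-(xt / y) ^ (1 / lam)) *
      Real.sin (y * Real.tan (Real.pi * lam) + Real.pi * μ) with hG
  -- Integrability of F
  have h1lam : (0:ℝ) < 1 + lam := by linarith
  set A : ℝ := (2 * xt) ^ ((1 + lam)⁻¹) with hA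
  have hApos : 0 < A := Real.rpow_pos_of_pos (by linarith) _
  set R : ℝ := max 1 A with hR
  set K : ℝ := xt * R ^ (-lam) with hK
  have hK0 : 0 ≤ K := mul_nonneg hxt0.le (Real.rpow_nonneg (le_trans zero_le_one (le_max_left 1 A)) _)
  have hgrow : ∀ r : ℝ, 0 < r → xt * r ^ (-lam) ≤ r / 2 + K := by
    intro r hr
    rcases le_total r R with h | h
    · have h' : r ^ (-lam) ≤ R ^ (-lam) := Real.rpow_le_rpow hr.le h hplam.le
      have : xt * r ^ (-lam) ≤ K := by
        rw [hK]; exact mul_le_mul_of_nonneg_left h' hxt0.le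
      linarith
    · have hrA : A ≤ r := le_trans (le_max_right 1 A) h
      have e : r ^ (-lam) = r * r ^ (-(1 + lam)) := by
        rw [show -lam = 1 + -(1 + lam) by ring, Real.rpow_add hr, Real.rpow_one]
      have hmono : r ^ (-(1 + lam)) ≤ A ^ (-(1 + lam)) := by
        rw [Real.rpow_neg hr.le, Real.rpow_neg hApos.le]
        exact inv_anti₀ (Real.rpow_pos_of_pos hApos _)
          (Real.rpow_le_rpow hApos.le hrA h1lam.le)
      have hA1 : A ^ (-(1 + lam)) = (2 * xt)⁻¹ := by
        rw [hA, ← Real.rpow_mul (by linarith : (0:ℝ) ≤ 2 * xt),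
          show (1 + lam)⁻¹ * -(1 + lam) = -1 by field_simp, Real.rpow_neg_one]
      have : xt * r ^ (-lam) ≤ r / 2 := by
        rw [e]
        have h2' : r ^ (-(1 + lam)) ≤ (2 * xt)⁻¹ := hA1 ▸ hmono
        have := mul_le_mul_of_nonneg_left h2' (mul_nonneg hxt0.le hr.le)
        calc xt * (r * r ^ (-(1 + lam))) = xt * r * r ^ (-(1 + lam)) := by ring
          _ ≤ xt * r * (2 * xt)⁻¹ := this
          _ = r / 2 := by field_simp
      linarith
  have hFmeas : AEStronglyMeasurable F (volume.restrict (Set.Ioi 0)) := by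
    apply ContinuousOn.aestronglyMeasurable _ measurableSet_Ioi
    have hrp : ∀ e : ℝ, ContinuousOn (fun r : ℝ => r ^ e) (Set.Ioi 0) := fun e r hr =>
      (Real.continuousAt_rpow_const r e (Or.inl (ne_of_gt hr))).continuousWithinAt
    apply ContinuousOn.mul
    apply ContinuousOn.mul
    apply ContinuousOn.mul
    · exact hrp (-μ)
    · exact (Real.continuous_exp.comp continuous_neg).continuousOn
    · exact Real.continuous_exp.comp_continuousOn
        ((continuousOn_const.mul (hrp (-lam))).mul continuousOn_const)
    · exact Real.continuous_sin.comp_continuousOn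
        (((continuousOn_const.mul (hrp (-lam))).mul continuousOn_const).add continuousOn_const)
  have hBint : IntegrableOn
      (fun r : ℝ => Real.exp K * (r ^ (-μ) * Real.exp (-(1/2) * r ^ (1:ℝ)))) (Set.Ioi 0) := by
    exact (integrableOn_rpow_mul_exp_neg_mul_rpow (by linarith : (-1:ℝ) < -μ) (zero_lt_one : (0:ℝ) < 1)
      (by norm_num)).const_mul _
  have hFint : IntegrableOn F (Set.Ioi 0) := by
    apply Integrable.mono' hBint hFmeas
    rw [ae_restrict_iff' measurableSet_Ioi]
    filter_upwards with r hr
    have hrpos : (0:ℝ) < r := hr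
    have harg : -x * r ^ (-lam) * Real.cos (lam * Real.pi) = xt * r ^ (-lam) := by
      rw [hxt]; ring
    have hsin : |Real.sin (-x * r ^ (-lam) * Real.sin (Real.pi * lam) + Real.pi * μ)| ≤ 1 :=
      abs_le.mpr ⟨Real.neg_one_le_sin _, Real.sin_le_one _⟩
    have hnn : (0:ℝ) ≤ r ^ (-μ) * Real.exp (-r) * Real.exp (xt * r ^ (-lam)) := by positivity
    calc ‖F r‖ = r ^ (-μ) * Real.exp (-r) * Real.exp (xt * r ^ (-lam)) *
          |Real.sin (-x * r ^ (-lam) * Real.sin (Real.pi * lam) + Real.pi * μ)| := by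
          rw [hF]
          simp only [Real.norm_eq_abs, abs_mul, harg,
            abs_of_nonneg (Real.rpow_nonneg hrpos.le (-μ)),
            abs_of_nonneg (Real.exp_nonneg (-r)),
            abs_of_nonneg (Real.exp_nonneg (xt * r ^ (-lam)))]
      _ ≤ r ^ (-μ) * Real.exp (-r) * Real.exp (xt * r ^ (-lam)) * 1 :=
          mul_le_mul_of_nonneg_left hsin hnn
      _ = r ^ (-μ) * Real.exp (-r + xt * r ^ (-lam)) := by
          rw [Real.exp_add]; ring
      _ ≤ r ^ (-μ) * Real.exp (-r + (r / 2 + K)) :=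
          mul_le_mul_of_nonneg_left (Real.exp_le_exp.mpr (by linarith [hgrow r hrpos]))
            (Real.rpow_nonneg hrpos.le _)
      _ = Real.exp K * (r ^ (-μ) * Real.exp (-(1/2) * r ^ (1:ℝ))) := by
          rw [Real.rpow_one, show -r + (r / 2 + K) = K + -(1/2) * r by ring, Real.exp_add]
          ring
  -- key pointwise identity
  have key : ∀ r ∈ Set.Ioi (0:ℝ),
      (|(-lam)| * r ^ (-lam - 1)) * G (xt * r ^ (-lam)) = ((-lam) * xt ^ ((μ - 1) / lam - 1)) * F r := by
    intro r hr
    have hrpos : (0:ℝ) < r := hr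
    have hrl : (0:ℝ) < r ^ (-lam) := Real.rpow_pos_of_pos hrpos _
    have e1 : xt / (xt * r ^ (-lam)) = r ^ lam := by
      rw [div_mul_cancel_left₀ (ne_of_gt hxt0), Real.rpow_neg hrpos.le, inv_inv]
    have e2 : (r ^ lam) ^ (1 / lam) = r := by
      rw [← Real.rpow_mul hrpos.le, mul_one_div_cancel hlamne, Real.rpow_one]
    have e3 : (xt * r ^ (-lam)) ^ ((μ - 1) / lam - 1)
        = xt ^ ((μ - 1) / lam - 1) * r ^ (-lam * ((μ - 1) / lam - 1)) := by
      rw [Real.mul_rpow hxt0.le hrl.le, ← Real.rpow_mul hrpos.le]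
    have e7 : xt * r ^ (-lam) * Real.tan (Real.pi * lam)
        = -x * r ^ (-lam) * Real.sin (Real.pi * lam) := by
      rw [mul_right_comm, hxt, mul_comm lam Real.pi, Real.tan_eq_sin_div_cos]
      field_simp
    have e6 : -x * r ^ (-lam) * Real.cos (lam * Real.pi) = xt * r ^ (-lam) := by
      rw [hxt]; ring
    have e8 : r ^ (-lam - 1) * r ^ (-lam * ((μ - 1) / lam - 1)) = r ^ (-μ) := by
      rw [← Real.rpow_add hrpos]
      congr 1
      field_simp
      ring
    simp only [hG, hF]
    rw [abs_of_pos hplam, e1, e2, e3, e7, e6]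
    calc (-lam) * r ^ (-lam - 1) * (xt ^ ((μ - 1) / lam - 1) * r ^ (-lam * ((μ - 1) / lam - 1)) *
            Real.exp (xt * r ^ (-lam)) * Real.exp (-r) *
            Real.sin (-x * r ^ (-lam) * Real.sin (Real.pi * lam) + Real.pi * μ))
        = (-lam) * xt ^ ((μ - 1) / lam - 1) *
            ((r ^ (-lam - 1) * r ^ (-lam * ((μ - 1) / lam - 1))) * Real.exp (-r) *
              Real.exp (xt * r ^ (-lam)) *
              Real.sin (-x * r ^ (-lam) * Real.sin (Real.pi * lam) + Real.pi * μ)) := by ring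
      _ = _ := by rw [e8]
  -- integrability of G
  have hsub1 : IntegrableOn
      (fun r : ℝ => (|(-lam)| * r ^ (-lam - 1)) * G (xt * r ^ (-lam))) (Set.Ioi 0) := by
    apply IntegrableOn.congr_fun (hFint.const_mul ((-lam) * xt ^ ((μ - 1) / lam - 1))) _
      measurableSet_Ioi
    intro r hr
    exact (key r hr).symm
  have hGmul : IntegrableOn (fun u : ℝ => G (xt * u)) (Set.Ioi 0) := by
    refine (integrableOn_Ioi_comp_rpow_iff (fun u : ℝ => G (xt * u)) hpne).mp ?_
    exact hsub1
  have hGint : IntegrableOn G (Set.Ioi 0) := by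
    have := (integrableOn_Ioi_comp_mul_left_iff G 0 hxt0).mp hGmul
    rwa [mul_zero] at this
  -- the integral identity
  have e1 : (∫ r in Set.Ioi (0:ℝ), (|(-lam)| * r ^ (-lam - 1)) * G (xt * r ^ (-lam)))
      = ∫ u in Set.Ioi (0:ℝ), G (xt * u) :=
    integral_comp_rpow_Ioi (fun u : ℝ => G (xt * u)) hpne
  have e2 : (∫ u in Set.Ioi (0:ℝ), G (xt * u)) = xt⁻¹ * ∫ y in Set.Ioi (0:ℝ), G y := by
    have := integral_comp_mul_left_Ioi G 0 hxt0
    rwa [mul_zero, smul_eq_mul] at this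
  have e4 : (∫ r in Set.Ioi (0:ℝ), (|(-lam)| * r ^ (-lam - 1)) * G (xt * r ^ (-lam)))
      = ∫ r in Set.Ioi (0:ℝ), ((-lam) * xt ^ ((μ - 1) / lam - 1)) * F r :=
    setIntegral_congr_fun measurableSet_Ioi fun r hr => key r hr
  have e5 : (∫ r in Set.Ioi (0:ℝ), ((-lam) * xt ^ ((μ - 1) / lam - 1)) * F r)
      = ((-lam) * xt ^ ((μ - 1) / lam - 1)) * ∫ r in Set.Ioi (0:ℝ), F r :=
    MeasureTheory.integral_const_mul _ _
  have hGval : (∫ y in Set.Ioi (0:ℝ), G y)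
      = xt * (((-lam) * xt ^ ((μ - 1) / lam - 1)) * ∫ r in Set.Ioi (0:ℝ), F r) := by
    rw [← e5, ← e4, e1, e2, ← mul_assoc, mul_inv_cancel₀ (ne_of_gt hxt0), one_mul]
  refine ⟨hxt0, hFint, hGint, ?_⟩
  rw [hGval]
  have hpow : xt ^ (-(μ - 1) / lam) * (xt * xt ^ ((μ - 1) / lam - 1)) = 1 := by
    rw [mul_comm xt (xt ^ ((μ - 1) / lam - 1)), ← Real.rpow_add_one (ne_of_gt hxt0),
      ← Real.rpow_add hxt0,
      show -(μ - 1) / lam + ((μ - 1) / lam - 1 + 1) = 0 by ring, Real.rpow_zero]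
  calc (∫ r in Set.Ioi (0:ℝ), F r)
      = (-(1 / lam) * (-lam)) * (xt ^ (-(μ - 1) / lam) * (xt * xt ^ ((μ - 1) / lam - 1))) *
        ∫ r in Set.Ioi (0:ℝ), F r := by
        rw [hpow, show -(1 / lam) * (-lam) = 1 by field_simp]
        ring
    _ = -(1 / lam) * xt ^ (-(μ - 1) / lam) *
        (xt * (((-lam) * xt ^ ((μ - 1) / lam - 1)) * ∫ r in Set.Ioi (0:ℝ), F r)) := by ring
end
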